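/- Let (P,⪯₊,⪯₋) be any double poset. Then the double chain polytope T_C(P,⪯₊,⪯₋) is exactly the set of pairs (g,t) ∈ ℝ^P × ℝ such that Σ_{a∈C₊} g(a) − t ≤ 1 for every chain C₊ of (P,⪯₊) (including the empty chain) and −Σ_{a∈C₋} g(a) + t ≤ 1 for every chain C₋ of (P,⪯₋) (including the empty chain). -/
import Mathlib


open Set Pointwise

/-- The chain polytope of a finite poset `(P, le)`: nonnegative functions whose sums
over chains are at most `1`. -/
def chainPoly (P : Type*) [Fintype P] (le : P → P → Prop) : Set (P → ℝ) :=
  {g | (∀ a, 0 ≤ g a) ∧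
    ∀ C : Finset P, (∀ a ∈ C, ∀ b ∈ C, le a b ∨ le b a) → ∑ a ∈ C, g a ≤ 1}

/-- The double chain polytope `T_C(P, lep, lem)`. -/
def doubleChainPoly (P : Type*) [Fintype P] (lep lem : P → P → Prop) :
    Set ((P → ℝ) × ℝ) :=
  convexHull ℝ
    (((fun g => (g, (1 : ℝ))) '' ((2 : ℝ) • chainPoly P lep)) ∪
     ((fun g => (g, (-1 : ℝ))) '' ((-2 : ℝ) • chainPoly P lem)))

lemma max_sub_max_neg (a : ℝ) : max a 0 - max (-a) 0 = a := by
  rcases le_total 0 a with h | h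
  · rw [max_eq_left h, max_eq_right (neg_nonpos.2 h)]; ring
  · rw [max_eq_right h, max_eq_left (neg_nonneg.2 h)]; ring

lemma sum_max_eq_filter {P : Type*} (g : P → ℝ) (C : Finset P) :
    ∑ a ∈ C, max (g a) 0 = ∑ a ∈ C.filter (fun a => 0 ≤ g a), g a := by
  rw [Finset.sum_filter]
  refine Finset.sum_congr rfl fun a _ => ?_
  rcases le_or_gt 0 (g a) with h | h
  · rw [max_eq_left h, if_pos h]
  · rw [max_eq_right h.le, if_neg (not_le.2 h)]


/-- The double chain polytope is exactly the set of `(g,t)` with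
`∑_{a∈C₊} g(a) − t ≤ 1` for every chain `C₊` of `(P,⪯₊)` and
`−∑_{a∈C₋} g(a) + t ≤ 1` for every chain `C₋` of `(P,⪯₋)` (including empty chains). -/
theorem doubleChainPoly_eq_chain_inequalities
    (P : Type*) [Fintype P] (lep lem : P → P → Prop)
    (hp : IsPartialOrder P lep) (hm : IsPartialOrder P lem) :
    doubleChainPoly P lep lem =
      {x : (P → ℝ) × ℝ |
        (∀ C : Finset P, (∀ a ∈ C, ∀ b ∈ C, lep a b ∨ lep b a) →
          (∑ a ∈ C, x.1 a) - x.2 ≤ 1) ∧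
        (∀ C : Finset P, (∀ a ∈ C, ∀ b ∈ C, lem a b ∨ lem b a) →
          -(∑ a ∈ C, x.1 a) + x.2 ≤ 1)} := by
  apply le_antisymm
  · -- convex hull ⊆ halfspaces
    apply convexHull_min
    · rintro z (⟨g', ⟨h, ⟨hh1, hh2⟩, rfl⟩, rfl⟩ | ⟨g', ⟨h, ⟨hh1, hh2⟩, rfl⟩, rfl⟩)
      · constructor
        · intro C hC
          have := hh2 C hC
          have hs : ∑ a ∈ C, ((2:ℝ) • h) a = 2 * ∑ a ∈ C, h a := by
            simp [Finset.mul_sum]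
          simp only [hs]
          linarith
        · intro C hC
          have h0 : (0:ℝ) ≤ ∑ a ∈ C, ((2:ℝ) • h) a :=
            Finset.sum_nonneg fun a _ => by
              simp only [Pi.smul_apply, smul_eq_mul]
              exact mul_nonneg (by norm_num) (hh1 a)
          simp only
          linarith
      · constructor
        · intro C hC
          have h0 : ∑ a ∈ C, ((-2:ℝ) • h) a ≤ 0 :=
            Finset.sum_nonpos fun a _ => by
              simp only [Pi.smul_apply, smul_eq_mul]
              exact mul_nonpos_of_nonpos_of_nonneg (by norm_num) (hh1 a)
          simp only
          linarith
        · intro C hC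
          have := hh2 C hC
          have hs : ∑ a ∈ C, ((-2:ℝ) • h) a = -2 * ∑ a ∈ C, h a := by
            simp [Finset.mul_sum]
          simp only [hs]
          linarith
    · -- convexity of RHS
      intro x hx y hy a b ha hb hab
      constructor
      · intro C hC
        have h1 := hx.1 C hC
        have h2 := hy.1 C hC
        have hs : ∑ c ∈ C, (a • x + b • y).1 c
            = a * ∑ c ∈ C, x.1 c + b * ∑ c ∈ C, y.1 c := by
          simp [Finset.sum_add_distrib, Finset.mul_sum]
        have ht : (a • x + b • y).2 = a * x.2 + b * y.2 := by simp
        rw [hs, ht]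
        nlinarith
      · intro C hC
        have h1 := hx.2 C hC
        have h2 := hy.2 C hC
        have hs : ∑ c ∈ C, (a • x + b • y).1 c
            = a * ∑ c ∈ C, x.1 c + b * ∑ c ∈ C, y.1 c := by
          simp [Finset.sum_add_distrib, Finset.mul_sum]
        have ht : (a • x + b • y).2 = a * x.2 + b * y.2 := by simp
        rw [hs, ht]
        nlinarith
  · -- halfspaces ⊆ convex hull
    rintro ⟨g, t⟩ ⟨H1, H2⟩
    simp only at H1 H2
    have ht1 : t ≤ 1 := by
      have := H2 ∅ (by simp); simpa using this
    have ht2 : -1 ≤ t := by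
      have := H1 ∅ (by simp); simp at this; linarith
    -- singleton chain bounds
    have hg1 : ∀ a, t - 1 ≤ g a := by
      intro a
      have := H2 {a} (by simp [hm.refl a])
      simp at this; linarith
    have hg2 : ∀ a, g a ≤ 1 + t := by
      intro a
      have := H1 {a} (by simp [hp.refl a])
      simp at this; linarith
    set hP : P → ℝ := fun a => max (g a) 0 / (1 + t) with hPdef
    set hM : P → ℝ := fun a => max (-g a) 0 / (1 - t) with hMdef
    have h2t : (0:ℝ) ≤ 1 + t := by linarith
    have h2t' : (0:ℝ) ≤ 1 - t := by linarith
    have hPmem : hP ∈ chainPoly P lep := by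
      constructor
      · intro a; exact div_nonneg (le_max_right _ _) h2t
      · intro C hC
        have hs : ∑ a ∈ C, hP a = (∑ a ∈ C, max (g a) 0) / (1 + t) := by
          simp [hPdef, Finset.sum_div]
        rw [hs]
        rcases eq_or_lt_of_le h2t with h | h
        · simp [← h]
        · rw [div_le_one h, sum_max_eq_filter]
          have hC' : ∀ a ∈ C.filter (fun a => 0 ≤ g a), ∀ b ∈ C.filter (fun a => 0 ≤ g a),
              lep a b ∨ lep b a := fun a ha b hb =>
            hC a (Finset.mem_of_mem_filter a ha) b (Finset.mem_of_mem_filter b hb)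
          have := H1 _ hC'
          linarith
    have hMmem : hM ∈ chainPoly P lem := by
      constructor
      · intro a; exact div_nonneg (le_max_right _ _) h2t'
      · intro C hC
        have hs : ∑ a ∈ C, hM a = (∑ a ∈ C, max (-g a) 0) / (1 - t) := by
          simp [hMdef, Finset.sum_div]
        rw [hs]
        rcases eq_or_lt_of_le h2t' with h | h
        · simp [← h]
        · rw [div_le_one h]
          have : ∑ a ∈ C, max (-g a) 0 = ∑ a ∈ C.filter (fun a => 0 ≤ -g a), -g a :=
            sum_max_eq_filter (fun a => -g a) C
          rw [this, Finset.sum_neg_distrib]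
          have hC' : ∀ a ∈ C.filter (fun a => 0 ≤ -g a), ∀ b ∈ C.filter (fun a => 0 ≤ -g a),
              lem a b ∨ lem b a := fun a ha b hb =>
            hC a (Finset.mem_of_mem_filter a ha) b (Finset.mem_of_mem_filter b hb)
          have := H2 _ hC'
          linarith
    have mem1 : ((2:ℝ) • hP, (1:ℝ)) ∈
        (((fun g => (g, (1 : ℝ))) '' ((2 : ℝ) • chainPoly P lep)) ∪
         ((fun g => (g, (-1 : ℝ))) '' ((-2 : ℝ) • chainPoly P lem))) :=
      Or.inl ⟨(2:ℝ) • hP, smul_mem_smul_set hPmem, rfl⟩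
    have mem2 : ((-2:ℝ) • hM, (-1:ℝ)) ∈
        (((fun g => (g, (1 : ℝ))) '' ((2 : ℝ) • chainPoly P lep)) ∪
         ((fun g => (g, (-1 : ℝ))) '' ((-2 : ℝ) • chainPoly P lem))) :=
      Or.inr ⟨(-2:ℝ) • hM, smul_mem_smul_set hMmem, rfl⟩
    have key : ((1 + t)/2) • (((2:ℝ) • hP, (1:ℝ)) : (P → ℝ) × ℝ)
        + ((1 - t)/2) • (((-2:ℝ) • hM, (-1:ℝ)) : (P → ℝ) × ℝ) = (g, t) := by
      ext a
      · simp only [Prod.fst_add, Prod.smul_fst, Pi.add_apply, Pi.smul_apply, smul_eq_mul]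
        have expand : (1 + t)/2 * (2 * hP a) + (1 - t)/2 * (-2 * hM a)
            = (1 + t) * hP a - (1 - t) * hM a := by ring
        rw [expand]
        rcases eq_or_lt_of_le h2t with h | h
        · -- t = -1 : g a ≤ 0
          have hga : g a ≤ 0 := by have := hg2 a; linarith
          have hP0 : hP a = 0 := by
            simp [hPdef, ← h]
          have h1t : (1 - t) ≠ 0 := by intro hc; linarith
          have hM1 : (1 - t) * hM a = -g a := by
            rw [hMdef]
            simp only
            rw [max_eq_left (neg_nonneg.2 hga), mul_comm, div_mul_cancel₀ _ h1t]
          rw [hP0, mul_zero, zero_sub, hM1]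
          ring
        · rcases eq_or_lt_of_le h2t' with h' | h'
          · -- t = 1 : 0 ≤ g a
            have hga : 0 ≤ g a := by have := hg1 a; linarith
            have hM0 : hM a = 0 := by simp [hMdef, ← h']
            rw [hM0, mul_zero, sub_zero, hPdef]
            simp only
            rw [mul_comm, div_mul_cancel₀ _ (ne_of_gt h), max_eq_left hga]
          · rw [hPdef, hMdef]
            simp only
            rw [mul_comm, div_mul_cancel₀ _ (ne_of_gt h), mul_comm (1 - t),
              div_mul_cancel₀ _ (ne_of_gt h'), max_sub_max_neg]
      · simp only [Prod.snd_add, Prod.smul_snd, smul_eq_mul]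
        ring
    rw [← key]
    exact convex_convexHull ℝ _ (subset_convexHull ℝ _ mem1) (subset_convexHull ℝ _ mem2)
      (by linarith) (by linarith) (by ring)
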